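/- For the MMD functional with negative distance kernel and any ν ∈ P₂(ℝ), the functional F_ν(u) := ∫₀¹ [(1-2s)u(s) + ∫₀¹ |u(s) - Q_ν(t)| dt] ds on L²(0,1) satisfies F_ν(Q_ν) ≤ F_ν(Q_μ) for all μ ∈ P₂(ℝ), i.e., Q_ν minimizes F_ν over the cone of quantile functions; equivalently, MMD²_K(μ,ν) = F_ν(Q_μ) - F_ν(Q_ν) ≥ 0 with equality iff μ = ν, where K(x,y) = -|x-y|. -/

import Mathlib

/-!
Lebesgue measure on `(0,1)` is pushed forward to `α` by the quantile function `Quant α`, so both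
terms of `Fnu ν (Quant μ)` are expectations. The second is `E|X - Y|` for independent `X ∼ μ`,
`Y ∼ ν`. For the first, monotonicity of `Quant μ` splits `|Quant μ s - Quant μ t|` along `t < s`,
and Fubini over the triangle `t < s` turns `∫ (1 - 2s) Quant μ s ds` into `-E|X - X'| / 2`, with
`X'` an independent copy of `X`. Hence
`Fnu ν (Quant μ) - Fnu ν (Quant ν) = E|X - Y| - E|X - X'| / 2 - E|Y - Y'| / 2 = MMD²`.
Writing `|x - y|` as the length of the interval between `x` and `y` and exchanging integrals gives
`E|X - Y| = ∫ F_μ (1 - F_ν) + (1 - F_μ) F_ν`, so `MMD² = ∫ (F_μ - F_ν)²` (Cramér). This is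
nonnegative, and it vanishes only if the right-continuous cdfs agree a.e., hence everywhere.
-/

open MeasureTheory Set Filter ProbabilityTheory
open scoped Topology

noncomputable def Rplus (μ : Measure ℝ) (x : ℝ) : ℝ := (μ (Iic x)).toReal

noncomputable def Quant (μ : Measure ℝ) (s : ℝ) : ℝ := sInf {x : ℝ | s ≤ Rplus μ x}

/-- The functional `F_ν` on functions on `(0,1)`. -/
noncomputable def Fnu (ν : Measure ℝ) (u : ℝ → ℝ) : ℝ :=
  ∫ s in Ioo (0 : ℝ) 1,
    ((1 - 2 * s) * u s + ∫ t in Ioo (0 : ℝ) 1, |u s - Quant ν t|)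

/-- `MMD²_K(μ,ν)` for the negative distance kernel `K(x,y) = -|x-y|`. -/
noncomputable def MMD2 (μ ν : Measure ℝ) : ℝ :=
  (1 / 2) * (∫ x, (∫ y, -|x - y| ∂μ) ∂μ) - (∫ x, (∫ y, -|x - y| ∂ν) ∂μ) +
    (1 / 2) * (∫ x, (∫ y, -|x - y| ∂ν) ∂ν)

section Quantile

variable (μ : Measure ℝ)

lemma bddBelow_setOf_le_cdf {s : ℝ} (hs : 0 < s) : BddBelow {x | s ≤ cdf μ x} := by
  obtain ⟨y, hy⟩ := ((tendsto_cdf_atBot μ).eventually (eventually_lt_nhds hs)).exists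
  refine ⟨y, fun z hz => ?_⟩
  by_contra! hzy
  exact (hz.trans (monotone_cdf μ hzy.le)).not_gt hy

lemma nonempty_setOf_le_cdf {s : ℝ} (hs : s < 1) : {x | s ≤ cdf μ x}.Nonempty :=
  ((tendsto_cdf_atTop μ).eventually (eventually_ge_nhds hs)).exists

variable [IsProbabilityMeasure μ]

lemma rplus_eq_cdf : Rplus μ = cdf μ := funext fun x => (cdf_eq_real μ x).symm

variable {μ} in
lemma quant_le_iff {s : ℝ} (hs : s ∈ Ioo (0 : ℝ) 1) {x : ℝ} : Quant μ s ≤ x ↔ s ≤ cdf μ x := by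
  rw [Quant, rplus_eq_cdf]
  refine ⟨fun h => ?_, fun h => csInf_le (bddBelow_setOf_le_cdf μ hs.1) h⟩
  -- every `y > x` lies in `{y | s ≤ cdf μ y}`; right continuity lets `y` decrease to `x`
  have hgt : ∀ᶠ y in 𝓝[>] x, s ≤ cdf μ y := eventually_nhdsWithin_of_forall fun y hy => by
    obtain ⟨z, hz, hzy⟩ := (csInf_lt_iff (bddBelow_setOf_le_cdf μ hs.1)
      (nonempty_setOf_le_cdf μ hs.2)).1 (h.trans_lt hy)
    exact hz.trans (monotone_cdf μ hzy.le)
  exact ge_of_tendsto (((cdf μ).right_continuous x).mono_left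
    (nhdsWithin_mono x Ioi_subset_Ici_self)) hgt

lemma monotoneOn_quant : MonotoneOn (Quant μ) (Ioo 0 1) := fun _ hs _ ht hst =>
  (quant_le_iff hs).2 (hst.trans ((quant_le_iff ht).1 le_rfl))

lemma aemeasurable_quant : AEMeasurable (Quant μ) (volume.restrict (Ioo 0 1)) :=
  aemeasurable_restrict_of_monotoneOn measurableSet_Ioo (monotoneOn_quant μ)

lemma volume_Iic_inter_Ioo {c : ℝ} (hc : c ∈ Icc (0 : ℝ) 1) :
    volume (Iic c ∩ Ioo 0 1) = ENNReal.ofReal c := by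
  refine le_antisymm ?_ ?_
  · calc volume (Iic c ∩ Ioo 0 1) ≤ volume (Ioc 0 c) :=
          measure_mono fun s ⟨hsc, hs⟩ => ⟨hs.1, hsc⟩
      _ = ENNReal.ofReal c := by rw [Real.volume_Ioc, sub_zero]
  · calc ENNReal.ofReal c = volume (Ioo 0 c) := by rw [Real.volume_Ioo, sub_zero]
      _ ≤ volume (Iic c ∩ Ioo 0 1) :=
          measure_mono fun s hs => ⟨hs.2.le, hs.1, hs.2.trans_le hc.2⟩

lemma map_quant : (volume.restrict (Ioo 0 1)).map (Quant μ) = μ := by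
  refine Measure.ext_of_Iic _ _ fun x => ?_
  have hpre : Quant μ ⁻¹' Iic x ∩ Ioo 0 1 = Iic (cdf μ x) ∩ Ioo 0 1 := by
    ext s
    exact and_congr_left fun hs => quant_le_iff hs
  rw [Measure.map_apply_of_aemeasurable (aemeasurable_quant μ) measurableSet_Iic,
    Measure.restrict_apply' measurableSet_Ioo, hpre,
    volume_Iic_inter_Ioo ⟨cdf_nonneg μ x, cdf_le_one μ x⟩, ofReal_cdf]

lemma integral_comp_quant {E : Type*} [NormedAddCommGroup E] [NormedSpace ℝ E] {f : ℝ → E}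
    (hf : AEStronglyMeasurable f μ) :
    ∫ s in Ioo 0 1, f (Quant μ s) = ∫ x, f x ∂μ := by
  rw [← integral_map (aemeasurable_quant μ) (by rwa [map_quant]), map_quant]

lemma integrableOn_comp_quant {E : Type*} [NormedAddCommGroup E] {f : ℝ → E} (hf : Integrable f μ) :
    IntegrableOn (fun s => f (Quant μ s)) (Ioo 0 1) := by
  rw [← map_quant μ] at hf
  exact hf.comp_aemeasurable (aemeasurable_quant μ)

end Quantile

section UnitInterval

lemma measureReal_restrict_Ioo_Iio {s : ℝ} (hs : s ∈ Ioo (0 : ℝ) 1) :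
    (volume.restrict (Ioo (0 : ℝ) 1)).real (Iio s) = s := by
  rw [measureReal_restrict_apply measurableSet_Iio, Iio_inter_Ioo, min_eq_left hs.2.le,
    Real.volume_real_Ioo_of_le hs.1.le, sub_zero]

lemma measureReal_restrict_Ioo_Ioi {s : ℝ} (hs : s ∈ Ioo (0 : ℝ) 1) :
    (volume.restrict (Ioo (0 : ℝ) 1)).real (Ioi s) = 1 - s := by
  have : Ioi s ∩ Ioo 0 1 = Ioo s 1 := by
    ext t
    simp only [mem_inter_iff, mem_Ioi, mem_Ioo]
    constructor
    · rintro ⟨hst, -, ht1⟩; exact ⟨hst, ht1⟩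
    · rintro ⟨hst, ht1⟩; exact ⟨hst, hs.1.trans hst, ht1⟩
  rw [measureReal_restrict_apply measurableSet_Ioi, this, Real.volume_real_Ioo_of_le hs.2.le]

variable {g : ℝ → ℝ}

lemma integrableOn_Ioo_continuous_mul {f : ℝ → ℝ} (hf : Continuous f)
    (hg : IntegrableOn g (Ioo 0 1)) : IntegrableOn (fun s => f s * g s) (Ioo 0 1) :=
  hg.continuousOn_mul_of_subset hf.continuousOn isCompact_Icc measurableSet_Ioo Ioo_subset_Icc_self

lemma integrable_indicator_Iio_prod (hg : IntegrableOn g (Ioo 0 1)) :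
    Integrable (fun p : ℝ × ℝ => (Iio p.1).indicator g p.2)
      ((volume.restrict (Ioo (0 : ℝ) 1)).prod (volume.restrict (Ioo (0 : ℝ) 1))) :=
  (hg.comp_snd _).indicator (measurableSet_lt measurable_snd measurable_fst)

lemma integral_Ioo_integral_Ioo_indicator_Iio (hg : IntegrableOn g (Ioo 0 1)) :
    ∫ s in Ioo (0 : ℝ) 1, ∫ t in Ioo (0 : ℝ) 1, (Iio s).indicator g t =
      ∫ t in Ioo (0 : ℝ) 1, (1 - t) * g t := by
  rw [integral_integral_swap (integrable_indicator_Iio_prod hg)]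
  refine setIntegral_congr_fun measurableSet_Ioo fun t ht => ?_
  have : (fun s => (Iio s).indicator g t) = (Ioi t).indicator fun _ => g t := by
    ext s
    simp only [indicator, mem_Iio, mem_Ioi]
  simp only [this, integral_indicator_const _ measurableSet_Ioi, measureReal_restrict_Ioo_Ioi ht,
    smul_eq_mul]

lemma abs_sub_eq_of_monotoneOn {Q : ℝ → ℝ} (hQ : MonotoneOn Q (Ioo 0 1)) {s t : ℝ}
    (hs : s ∈ Ioo (0 : ℝ) 1) (ht : t ∈ Ioo (0 : ℝ) 1) :
    |Q s - Q t| = Q t - Q s + 2 * ((Iio s).indicator (fun _ => Q s) t - (Iio s).indicator Q t) := by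
  rcases lt_or_ge t s with hts | hst
  · simp only [indicator_of_mem (mem_Iio.2 hts), abs_of_nonneg (sub_nonneg.2 (hQ ht hs hts.le))]
    ring
  · simp only [indicator_of_notMem (notMem_Iio.2 hst), abs_of_nonpos (sub_nonpos.2 (hQ hs ht hst))]
    ring

lemma integral_Ioo_abs_sub_of_monotoneOn {Q : ℝ → ℝ} (hQ : MonotoneOn Q (Ioo 0 1))
    (hi : IntegrableOn Q (Ioo 0 1)) {s : ℝ} (hs : s ∈ Ioo (0 : ℝ) 1) :
    ∫ t in Ioo (0 : ℝ) 1, |Q s - Q t| =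
      (∫ t in Ioo (0 : ℝ) 1, Q t) - Q s +
        2 * (s * Q s - ∫ t in Ioo (0 : ℝ) 1, (Iio s).indicator Q t) := by
  have hc : IntegrableOn (fun _ => Q s) (Ioo (0 : ℝ) 1) := integrableOn_const (by simp)
  have hcI : IntegrableOn ((Iio s).indicator fun _ => Q s) (Ioo (0 : ℝ) 1) :=
    hc.indicator measurableSet_Iio
  have hiI : IntegrableOn ((Iio s).indicator Q) (Ioo (0 : ℝ) 1) := hi.indicator measurableSet_Iio
  have hd : IntegrableOn (fun t => Q t - Q s) (Ioo (0 : ℝ) 1) := hi.sub hc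
  have hd' : IntegrableOn (fun t => 2 * ((Iio s).indicator (fun _ => Q s) t -
      (Iio s).indicator Q t)) (Ioo (0 : ℝ) 1) := (hcI.sub hiI).const_mul 2
  rw [setIntegral_congr_fun measurableSet_Ioo fun t ht => abs_sub_eq_of_monotoneOn hQ hs ht,
    integral_add hd hd', integral_sub hi hc, integral_const_mul, integral_sub hcI hiI,
    integral_indicator_const _ measurableSet_Iio,
    measureReal_restrict_Ioo_Iio hs, setIntegral_const]
  simp

lemma integral_Ioo_integral_Ioo_abs_sub_of_monotoneOn {Q : ℝ → ℝ} (hQ : MonotoneOn Q (Ioo 0 1))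
    (hi : IntegrableOn Q (Ioo 0 1)) :
    ∫ s in Ioo (0 : ℝ) 1, ∫ t in Ioo (0 : ℝ) 1, |Q s - Q t| =
      2 * ∫ s in Ioo (0 : ℝ) 1, (2 * s - 1) * Q s := by
  set G : ℝ → ℝ := fun s => ∫ t in Ioo (0 : ℝ) 1, (Iio s).indicator Q t
  have hG : IntegrableOn G (Ioo 0 1) := (integrable_indicator_Iio_prod hi).integral_prod_left
  have hsQ : IntegrableOn (fun s => s * Q s) (Ioo 0 1) :=
    integrableOn_Ioo_continuous_mul continuous_id hi
  have hc : IntegrableOn (fun _ => ∫ t in Ioo (0 : ℝ) 1, Q t) (Ioo (0 : ℝ) 1) :=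
    integrableOn_const (by simp)
  have h1 : IntegrableOn (fun s => (∫ t in Ioo (0 : ℝ) 1, Q t) - Q s) (Ioo 0 1) := hc.sub hi
  have h2 : IntegrableOn (fun s => 2 * (s * Q s - G s)) (Ioo 0 1) := (hsQ.sub hG).const_mul 2
  calc ∫ s in Ioo (0 : ℝ) 1, ∫ t in Ioo (0 : ℝ) 1, |Q s - Q t|
      = ∫ s in Ioo (0 : ℝ) 1, ((∫ t in Ioo (0 : ℝ) 1, Q t) - Q s + 2 * (s * Q s - G s)) :=
        setIntegral_congr_fun measurableSet_Ioo fun s hs =>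
          integral_Ioo_abs_sub_of_monotoneOn hQ hi hs
    _ = 2 * ((∫ s in Ioo (0 : ℝ) 1, s * Q s) - ∫ t in Ioo (0 : ℝ) 1, (1 - t) * Q t) := by
        rw [integral_add h1 h2, integral_sub hc hi, setIntegral_const,
          integral_const_mul, integral_sub hsQ hG, integral_Ioo_integral_Ioo_indicator_Iio hi]
        simp
    _ = 2 * ∫ s in Ioo (0 : ℝ) 1, (2 * s - 1) * Q s := by
        rw [← integral_sub hsQ (integrableOn_Ioo_continuous_mul (by fun_prop) hi)]
        congr 2 with s
        ring

end UnitInterval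

noncomputable def meanAbsDiff (α β : Measure ℝ) : ℝ := ∫ x, ∫ y, |x - y| ∂β ∂α

lemma mmd2_eq_meanAbsDiff (μ ν : Measure ℝ) :
    MMD2 μ ν = meanAbsDiff μ ν - meanAbsDiff μ μ / 2 - meanAbsDiff ν ν / 2 := by
  simp only [MMD2, meanAbsDiff, integral_neg]
  ring

lemma meanAbsDiff_nonneg (α β : Measure ℝ) : 0 ≤ meanAbsDiff α β :=
  integral_nonneg fun _ => integral_nonneg fun _ => abs_nonneg _

lemma lintegral_ofReal_abs_sub_prod (α β : Measure ℝ) [SFinite α] [SFinite β] :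
    ∫⁻ p, ENNReal.ofReal |p.1 - p.2| ∂(α.prod β) =
      ∫⁻ t, (α (Iic t) * β (Ioi t) + α (Ioi t) * β (Iic t)) := by
  -- both sides are the measure of `{(p, t) | t lies between p.1 and p.2}`, sliced in two ways
  set E : Set ((ℝ × ℝ) × ℝ) := {q | min q.1.1 q.1.2 ≤ q.2 ∧ q.2 < max q.1.1 q.1.2}
  have hE : MeasurableSet E :=
    (measurableSet_le (by fun_prop) measurable_snd).inter
      (measurableSet_lt measurable_snd (by fun_prop))
  calc ∫⁻ p, ENNReal.ofReal |p.1 - p.2| ∂(α.prod β)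
      = ∫⁻ p, volume (Prod.mk p ⁻¹' E) ∂(α.prod β) := by
        congr with p
        rw [← max_sub_min_eq_abs', ← Real.volume_Ico]
        rfl
    _ = ∫⁻ t, α.prod β ((fun p => (p, t)) ⁻¹' E) := by
        rw [← Measure.prod_apply hE, Measure.prod_apply_symm hE]
    _ = ∫⁻ t, (α (Iic t) * β (Ioi t) + α (Ioi t) * β (Iic t)) := by
        congr with t
        have hslice : (fun p => (p, t)) ⁻¹' E = Iic t ×ˢ Ioi t ∪ Ioi t ×ˢ Iic t := by
          ext ⟨x, y⟩
          simp only [E, mem_preimage, mem_ofPred_eq, mem_union, mem_prod, mem_Iic, mem_Ioi,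
            min_le_iff, lt_max_iff]
          grind
        rw [hslice, measure_union ?_ (measurableSet_Ioi.prod measurableSet_Iic),
          Measure.prod_prod, Measure.prod_prod]
        exact disjoint_left.2 fun p hp hq => not_lt.2 (mem_Iic.1 hp.1) (mem_Ioi.1 hq.1)

/-- `t ↦ P(X ≤ t < Y) + P(Y ≤ t < X)` for independent `X ∼ α`, `Y ∼ β`. -/
noncomputable def cdfCross (α β : Measure ℝ) (t : ℝ) : ℝ :=
  cdf α t * (1 - cdf β t) + (1 - cdf α t) * cdf β t

lemma sq_sub_cdf_eq_cdfCross (μ ν : Measure ℝ) (t : ℝ) :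
    (cdf μ t - cdf ν t) ^ 2 = cdfCross μ ν t - cdfCross μ μ t / 2 - cdfCross ν ν t / 2 := by
  simp only [cdfCross]
  ring

lemma cdfCross_nonneg (α β : Measure ℝ) (t : ℝ) : 0 ≤ cdfCross α β t :=
  add_nonneg (mul_nonneg (cdf_nonneg α t) (sub_nonneg.2 (cdf_le_one β t)))
    (mul_nonneg (sub_nonneg.2 (cdf_le_one α t)) (cdf_nonneg β t))

lemma measurable_cdfCross (α β : Measure ℝ) : Measurable (cdfCross α β) := by
  have := (monotone_cdf α).measurable
  have := (monotone_cdf β).measurable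
  unfold cdfCross
  fun_prop

lemma StieltjesFunction.eq_of_ae_eq {f g : StieltjesFunction ℝ} (h : ⇑f =ᵐ[volume] g) :
    f = g := by
  ext x
  by_contra hne
  have hev : ∀ᶠ y in 𝓝[>] x, f y ≠ g y :=
    (((f.right_continuous x).sub (g.right_continuous x)).mono Ioi_subset_Ici_self).eventually_ne
      (sub_ne_zero.2 hne) |>.mono fun y hy => sub_ne_zero.1 hy
  obtain ⟨b, hxb, hb⟩ := mem_nhdsGT_iff_exists_Ioo_subset.1 hev
  have : volume (Ioo x b) = 0 := measure_mono_null hb (ae_iff.1 h)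
  simp only [Real.volume_Ioo, ENNReal.ofReal_eq_zero, tsub_le_iff_right, zero_add] at this
  exact (mem_Ioi.1 hxb).not_ge this

lemma integrable_abs_sub_prod {α β : Measure ℝ} [IsFiniteMeasure α] [IsFiniteMeasure β]
    (hα : Integrable id α) (hβ : Integrable id β) :
    Integrable (fun p : ℝ × ℝ => |p.1 - p.2|) (α.prod β) :=
  ((hα.comp_fst β).sub (hβ.comp_snd α)).abs

section Cramer

variable {α β : Measure ℝ} [IsProbabilityMeasure α] [IsProbabilityMeasure β]

lemma measure_Ioi_eq_ofReal_one_sub_cdf (t : ℝ) : α (Ioi t) = ENNReal.ofReal (1 - cdf α t) := by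
  rw [← compl_Iic, prob_compl_eq_one_sub measurableSet_Iic, ← ofReal_cdf,
    ENNReal.ofReal_sub _ (cdf_nonneg α t), ENNReal.ofReal_one]

lemma ofReal_cdfCross (t : ℝ) :
    ENNReal.ofReal (cdfCross α β t) = α (Iic t) * β (Ioi t) + α (Ioi t) * β (Iic t) := by
  have hα := cdf_le_one α t
  have hβ := cdf_le_one β t
  rw [cdfCross, ENNReal.ofReal_add (mul_nonneg (cdf_nonneg α t) (by linarith))
      (mul_nonneg (by linarith) (cdf_nonneg β t)),
    ENNReal.ofReal_mul (cdf_nonneg α t), ENNReal.ofReal_mul (by linarith), ofReal_cdf, ofReal_cdf,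
    measure_Ioi_eq_ofReal_one_sub_cdf, measure_Ioi_eq_ofReal_one_sub_cdf]

lemma lintegral_ofReal_cdfCross (hα : Integrable id α) (hβ : Integrable id β) :
    ∫⁻ t, ENNReal.ofReal (cdfCross α β t) = ENNReal.ofReal (meanAbsDiff α β) := by
  rw [meanAbsDiff, ← integral_prod _ (integrable_abs_sub_prod hα hβ),
    ofReal_integral_eq_lintegral_ofReal (integrable_abs_sub_prod hα hβ)
      (ae_of_all _ fun _ => abs_nonneg _), lintegral_ofReal_abs_sub_prod]
  simp only [ofReal_cdfCross]

lemma integrable_cdfCross (hα : Integrable id α) (hβ : Integrable id β) :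
    Integrable (cdfCross α β) := by
  refine ⟨(measurable_cdfCross α β).aestronglyMeasurable, ?_⟩
  rw [hasFiniteIntegral_iff_ofReal (ae_of_all _ (cdfCross_nonneg α β)),
    lintegral_ofReal_cdfCross hα hβ]
  exact ENNReal.ofReal_lt_top

lemma meanAbsDiff_eq_integral_cdfCross (hα : Integrable id α) (hβ : Integrable id β) :
    meanAbsDiff α β = ∫ t, cdfCross α β t := by
  rw [integral_eq_lintegral_of_nonneg_ae (ae_of_all _ (cdfCross_nonneg α β))
    (integrable_cdfCross hα hβ).aestronglyMeasurable, lintegral_ofReal_cdfCross hα hβ,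
    ENNReal.toReal_ofReal (meanAbsDiff_nonneg α β)]

lemma integrable_sq_sub_cdf (hα : Integrable id α) (hβ : Integrable id β) :
    Integrable fun t => (cdf α t - cdf β t) ^ 2 := by
  simp_rw [sq_sub_cdf_eq_cdfCross]
  exact ((integrable_cdfCross hα hβ).sub ((integrable_cdfCross hα hα).div_const 2)).sub
    ((integrable_cdfCross hβ hβ).div_const 2)

lemma mmd2_eq_integral_sq_sub_cdf (hα : Integrable id α) (hβ : Integrable id β) :
    MMD2 α β = ∫ t, (cdf α t - cdf β t) ^ 2 := by
  have hαβ : Integrable fun t => cdfCross α β t := integrable_cdfCross hα hβ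
  have hαα : Integrable fun t => cdfCross α α t / 2 := (integrable_cdfCross hα hα).div_const 2
  have hββ : Integrable fun t => cdfCross β β t / 2 := (integrable_cdfCross hβ hβ).div_const 2
  simp_rw [sq_sub_cdf_eq_cdfCross]
  rw [integral_sub (f := fun t => cdfCross α β t - cdfCross α α t / 2) (hαβ.sub hαα) hββ,
    integral_sub hαβ hαα, integral_div, integral_div,
    mmd2_eq_meanAbsDiff, meanAbsDiff_eq_integral_cdfCross hα hβ,
    meanAbsDiff_eq_integral_cdfCross hα hα, meanAbsDiff_eq_integral_cdfCross hβ hβ]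

lemma mmd2_eq_zero_iff (hα : Integrable id α) (hβ : Integrable id β) :
    MMD2 α β = 0 ↔ α = β := by
  refine ⟨fun h => Measure.eq_of_cdf α β ?_, fun h => by rw [h, mmd2_eq_meanAbsDiff]; ring⟩
  rw [mmd2_eq_integral_sq_sub_cdf hα hβ, integral_eq_zero_iff_of_nonneg (fun t => sq_nonneg _)
    (integrable_sq_sub_cdf hα hβ)] at h
  exact StieltjesFunction.eq_of_ae_eq <| h.mono fun t ht =>
    sub_eq_zero.1 (pow_eq_zero_iff two_ne_zero |>.1 ht)

end Cramer

section QuantileEnergy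

variable {α β : Measure ℝ} [IsProbabilityMeasure α] [IsProbabilityMeasure β]

lemma integral_Ioo_abs_sub_quant (x : ℝ) :
    ∫ t in Ioo (0 : ℝ) 1, |x - Quant β t| = ∫ y, |x - y| ∂β :=
  integral_comp_quant β (by fun_prop : Continuous fun y => |x - y|).aestronglyMeasurable

lemma meanAbsDiff_eq_integral_quant (hα : Integrable id α) (hβ : Integrable id β) :
    meanAbsDiff α β = ∫ s in Ioo (0 : ℝ) 1, ∫ t in Ioo (0 : ℝ) 1, |Quant α s - Quant β t| := by
  have hQβ : IntegrableOn (Quant β) (Ioo 0 1) := integrableOn_comp_quant β hβ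
  have hint : Integrable (fun x => ∫ t in Ioo (0 : ℝ) 1, |x - Quant β t|) α :=
    ((hα.comp_fst _).sub (hQβ.comp_snd α)).abs.integral_prod_left
  simp_rw [meanAbsDiff, ← integral_Ioo_abs_sub_quant]
  exact (integral_comp_quant α hint.aestronglyMeasurable).symm

lemma integral_Ioo_one_sub_two_mul_quant (hα : Integrable id α) :
    ∫ s in Ioo (0 : ℝ) 1, (1 - 2 * s) * Quant α s = -(meanAbsDiff α α / 2) := by
  have hQ : IntegrableOn (Quant α) (Ioo 0 1) := integrableOn_comp_quant α hα
  rw [meanAbsDiff_eq_integral_quant hα hα,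
    integral_Ioo_integral_Ioo_abs_sub_of_monotoneOn (monotoneOn_quant α) hQ,
    mul_div_cancel_left₀ _ two_ne_zero, ← integral_neg]
  congr with s
  ring

lemma fnu_quant (hα : Integrable id α) (hβ : Integrable id β) :
    Fnu β (Quant α) = meanAbsDiff α β - meanAbsDiff α α / 2 := by
  have hQα : IntegrableOn (Quant α) (Ioo 0 1) := integrableOn_comp_quant α hα
  have hQβ : IntegrableOn (Quant β) (Ioo 0 1) := integrableOn_comp_quant β hβ
  have hdist : IntegrableOn (fun s => ∫ t in Ioo (0 : ℝ) 1, |Quant α s - Quant β t|) (Ioo 0 1) :=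
    ((hQα.comp_fst _).sub (hQβ.comp_snd _)).abs.integral_prod_left
  rw [Fnu, integral_add (integrableOn_Ioo_continuous_mul (by fun_prop) hQα) hdist,
    integral_Ioo_one_sub_two_mul_quant hα, meanAbsDiff_eq_integral_quant hα hβ]
  ring

end QuantileEnergy

/-- `Q_ν` minimizes `F_ν`, `MMD²_K(μ,ν) = F_ν(Q_μ) - F_ν(Q_ν) ≥ 0`, with equality
iff `μ = ν`. -/
theorem Fnu_minimized_at_target (μ ν : Measure ℝ)
    [IsProbabilityMeasure μ] [IsProbabilityMeasure ν]
    (hμ : Integrable (fun x : ℝ => x ^ 2) μ)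
    (hν : Integrable (fun x : ℝ => x ^ 2) ν) :
    Fnu ν (Quant ν) ≤ Fnu ν (Quant μ) ∧
    MMD2 μ ν = Fnu ν (Quant μ) - Fnu ν (Quant ν) ∧
    0 ≤ MMD2 μ ν ∧ (MMD2 μ ν = 0 ↔ μ = ν) := by
  have hμ1 : Integrable id μ :=
    ((memLp_two_iff_integrable_sq aestronglyMeasurable_id).2 hμ).integrable one_le_two
  have hν1 : Integrable id ν :=
    ((memLp_two_iff_integrable_sq aestronglyMeasurable_id).2 hν).integrable one_le_two
  have hdiff : MMD2 μ ν = Fnu ν (Quant μ) - Fnu ν (Quant ν) := by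
    rw [mmd2_eq_meanAbsDiff, fnu_quant hμ1 hν1, fnu_quant hν1 hν1]
    ring
  have hnonneg : 0 ≤ MMD2 μ ν := by
    rw [mmd2_eq_integral_sq_sub_cdf hμ1 hν1]
    exact integral_nonneg fun t => sq_nonneg _
  exact ⟨by linarith, hdiff, hnonneg, mmd2_eq_zero_iff hμ1 hν1⟩
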